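/- arXiv:2205.15425 — 3 statements merged into one kernel-verified Lean document; each statement's English description precedes it below -/
import Mathlib

section
/- For every integer k ≥ 1 there exists a graph G with Δ(G) = 2k+1 that is of class 2^±, i.e. χ'(G, σ) = 2k+2 for every signature σ. -/
open SimpleGraph

namespace Signed

variable {V : Type*}

/-- The color set `M n`. -/
def colorSet (n : ℕ) : Set ℤ :=
  {m : ℤ | 2 * m.natAbs ≤ n ∧ (Even n → m ≠ 0)}

/-- `f` is an `n`-edge-coloring of the signed graph `(G, σ)`. -/
def IsEdgeColoring (G : SimpleGraph V) (σ : Sym2 V → ℤ) (n : ℕ)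
    (f : V → Sym2 V → ℤ) : Prop :=
  (∀ u v, G.Adj u v → f u s(u, v) ∈ colorSet n) ∧
  (∀ u v, G.Adj u v → f u s(u, v) = - σ s(u, v) * f v s(u, v)) ∧
  (∀ u v w, G.Adj u v → G.Adj u w → v ≠ w → f u s(u, v) ≠ f u s(u, w))

/-- `(G, σ)` admits an `n`-edge-coloring. -/
def Colorable (G : SimpleGraph V) (σ : Sym2 V → ℤ) (n : ℕ) : Prop :=
  ∃ f, IsEdgeColoring G σ n f

/-- The signed chromatic index. -/
noncomputable def chromIndex (G : SimpleGraph V) (σ : Sym2 V → ℤ) : ℕ :=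
  sInf {n | Colorable G σ n}

/-- `σ` is a signature on `G`: it takes values `±1` on edges. -/
def IsSignature (G : SimpleGraph V) (σ : Sym2 V → ℤ) : Prop :=
  ∀ e ∈ G.edgeSet, σ e = 1 ∨ σ e = -1

/-- Maximum degree (classical decidability). -/
noncomputable def maxDeg [Fintype V] (G : SimpleGraph V) : ℕ :=
  @SimpleGraph.maxDegree V G _ (Classical.decRel _)

/-- degree of a vertex, instance-free. -/
noncomputable def deg (G : SimpleGraph V) (v : V) : ℕ :=
  (G.neighborSet v).ncard

/-- A signed graph is balanced if every cycle has sign product `1`. -/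
def Balanced (H : SimpleGraph V) (σ : Sym2 V → ℤ) : Prop :=
  ∀ (u : V) (w : H.Walk u u), w.IsCycle → (w.edges.map σ).prod = 1

/-- A set of edges of `G` forming a matching. -/
def IsMatchingSet (G : SimpleGraph V) (M : Set (Sym2 V)) : Prop :=
  M ⊆ G.edgeSet ∧ ∀ e ∈ M, ∀ e' ∈ M, ∀ v : V, v ∈ e → v ∈ e' → e = e'

/-- `H` is a path graph: some path walk carries all of its edges. -/
def IsPathGraph (H : SimpleGraph V) : Prop :=
  ∃ (u v : V) (p : H.Walk u v), p.IsPath ∧ ∀ e, e ∈ H.edgeSet ↔ e ∈ p.edges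

/-- Class `1^±`. -/
def Class1pm [Fintype V] (G : SimpleGraph V) : Prop :=
  ∀ σ : Sym2 V → ℤ, IsSignature G σ → chromIndex G σ = maxDeg G

/-- Class `2^±`. -/
def Class2pm [Fintype V] (G : SimpleGraph V) : Prop :=
  ∀ σ : Sym2 V → ℤ, IsSignature G σ → chromIndex G σ = maxDeg G + 1

end Signed

open Signed SimpleGraph

/-!
Write `n = k + 1`. The gadget is `K_{2n}` on `ZMod (2 * n)` plus a root `none` joined to every
`x ∉ {0, n}`, with the antipodal edges `x (x + n)` at these `x` deleted: its `2n + 1` vertices have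
degree `2n - 1`, except the root, of degree `2n - 2`. Two copies `some (b, ·)` have their roots
joined to a centre `none`.

With `2n - 1` colours the colour `0` is available and, by counting, it occurs at every vertex of
degree `2n - 1`; the `0`-edges form a matching. A copy has an odd number of vertices, all of full
degree, so some `0`-edge leaves it, and the only candidate is the edge to the centre, which then
sees `0` twice.

With `2n` colours, use the classical decomposition of `K_{2n}` into the `n` Hamiltonian paths
`c + (…, 2, -1, 1, 0 | n, n + 1, n - 1, n + 2, …)`, `c < n`: inserting the root into the middle
edge `c (c + n)` of every path but the one through `0 n`, and adding the path through the centre to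
that class, covers the graph by `n` linear forests. A linear forest is coloured with `±(c + 1)`
whatever the signature, switching the sign along each path.
-/

namespace Signed

section Coloring

variable {V : Type*} {G : SimpleGraph V} {σ : Sym2 V → ℤ} {n : ℕ} {f : V → Sym2 V → ℤ}

lemma colorSet_eq_coe_finset (n : ℕ) :
    colorSet n = ↑((Finset.Icc (-(n / 2 : ℤ)) (n / 2)).filter (fun m => Even n → m ≠ 0)) := by
  ext m
  simp only [colorSet, Set.mem_ofPred_eq, Finset.coe_filter, Finset.mem_Icc]
  exact and_congr_left fun _ => by omega

lemma ncard_colorSet (n : ℕ) : (colorSet n).ncard = n := by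
  rw [colorSet_eq_coe_finset, Set.ncard_coe_finset]
  rcases Nat.even_or_odd n with hn | hn
  · have : (Finset.Icc (-(n / 2 : ℤ)) (n / 2)).filter (fun m => Even n → m ≠ 0) =
        (Finset.Icc (-(n / 2 : ℤ)) (n / 2)).erase 0 := by
      ext m; simp [hn, and_comm]
    rw [this, Finset.card_erase_of_mem (by simp; omega), Int.card_Icc]
    obtain ⟨j, rfl⟩ := hn
    omega
  · rw [Finset.filter_true_of_mem (fun m _ h => absurd h (Nat.not_even_iff_odd.2 hn)),
      Int.card_Icc]
    obtain ⟨j, rfl⟩ := hn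
    omega

lemma zero_mem_colorSet (hn : Odd n) : (0 : ℤ) ∈ colorSet n :=
  ⟨by simp, fun h => absurd h (Nat.not_even_iff_odd.2 hn)⟩

namespace IsEdgeColoring

lemma mapsTo_colorSet (hf : IsEdgeColoring G σ n f) (u : V) :
    Set.MapsTo (fun v => f u s(u, v)) (G.neighborSet u) (colorSet n) :=
  fun _ hv => hf.1 _ _ hv

lemma injOn_neighborSet (hf : IsEdgeColoring G σ n f) (u : V) :
    Set.InjOn (fun v => f u s(u, v)) (G.neighborSet u) :=
  fun _ hv _ hw h => by_contra fun hvw => hf.2.2 u _ _ hv hw hvw h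

lemma deg_le (hf : IsEdgeColoring G σ n f) (u : V) : deg G u ≤ n := by
  rw [deg, ← ncard_colorSet n]
  exact Set.ncard_le_ncard_of_injOn _ (hf.mapsTo_colorSet u) (hf.injOn_neighborSet u)
    (colorSet_eq_coe_finset n ▸ Finset.finite_toSet _)

lemma exists_adj_eq_zero (hf : IsEdgeColoring G σ n f) (hn : Odd n) {u : V}
    (hu : n ≤ deg G u) : ∃ v, G.Adj u v ∧ f u s(u, v) = 0 := by
  have hfin : (colorSet n).Finite := colorSet_eq_coe_finset n ▸ Finset.finite_toSet _
  have himage : (fun v => f u s(u, v)) '' G.neighborSet u = colorSet n :=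
    Set.eq_of_subset_of_ncard_le (hf.mapsTo_colorSet u).image_subset
      (by rw [ncard_colorSet, (hf.injOn_neighborSet u).ncard_image]; exact hu) hfin
  obtain ⟨v, hv, h0⟩ := himage.symm ▸ zero_mem_colorSet hn
  exact ⟨v, hv, h0⟩

lemma eq_zero_of_eq_zero (hf : IsEdgeColoring G σ n f) {u v : V} (huv : G.Adj u v)
    (h : f u s(u, v) = 0) : f v s(u, v) = 0 := by
  have := hf.2.1 v u huv.symm
  rwa [Sym2.eq_swap, h, mul_zero] at this

/-- Otherwise the edges coloured `0` would form a perfect matching of `S`. -/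
theorem exists_zero_edge_leaving (hf : IsEdgeColoring G σ n f) {S : Finset V}
    (hS : Odd S.card) (hzero : ∀ u ∈ S, ∃ v, G.Adj u v ∧ f u s(u, v) = 0) :
    ∃ u ∈ S, ∃ v ∉ S, G.Adj u v ∧ f u s(u, v) = 0 := by
  by_contra! hout
  let Z : SimpleGraph S :=
    { Adj := fun a b => G.Adj a b ∧ f a s(a.1, b.1) = 0
      symm := ⟨fun a b h => ⟨h.1.symm, by rw [Sym2.eq_swap]; exact hf.eq_zero_of_eq_zero h.1 h.2⟩⟩
      loopless := ⟨fun a h => G.loopless.irrefl a h.1⟩ }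
  have hperfect : (⊤ : Z.Subgraph).IsPerfectMatching := by
    rw [Subgraph.isPerfectMatching_iff]
    intro a
    obtain ⟨v, hav, hv0⟩ := hzero a a.2
    have hvS : v ∈ S := by_contra fun hv => hout a a.2 v hv hav hv0
    refine ⟨⟨v, hvS⟩, ⟨hav, hv0⟩, fun b hb => Subtype.ext ?_⟩
    by_contra hbv
    exact hf.2.2 a b v hb.1 hav hbv (hb.2.trans hv0.symm)
  have := hperfect.even_card
  rw [Fintype.card_coe] at this
  exact Nat.not_even_iff_odd.2 hS this

end IsEdgeColoring

lemma chromIndex_eq_of_colorable {m : ℕ} (h : Colorable G σ m)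
    (hlt : ∀ m' < m, ¬ Colorable G σ m') : chromIndex G σ = m :=
  le_antisymm (Nat.sInf_le h) (le_csInf ⟨m, h⟩ fun _ hm' => not_lt.1 fun hlt' => hlt _ hlt' hm')

end Coloring

section Isomorphism

variable {V W : Type*} {G : SimpleGraph V} {G' : SimpleGraph W} {n : ℕ}

lemma degree_eq_deg [Fintype V] [DecidableRel G.Adj] (v : V) : G.degree v = deg G v := by
  rw [deg, ← card_neighborSet_eq_degree, Set.ncard_eq_toFinset_card', Set.toFinset_card]

lemma deg_le_maxDeg [Fintype V] (v : V) : deg G v ≤ maxDeg G := by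
  classical
  rw [maxDeg, ← degree_eq_deg]
  convert G.degree_le_maxDegree v

lemma maxDeg_le [Fintype V] {d : ℕ} (h : ∀ v, deg G v ≤ d) : maxDeg G ≤ d := by
  classical
  rw [maxDeg]
  convert G.maxDegree_le_of_forall_degree_le d fun v => (degree_eq_deg v).trans_le (h v)

lemma deg_iso (φ : G ≃g G') (v : V) : deg G' (φ v) = deg G v := by
  rw [deg, deg, ← Set.ncard_image_of_injective _ φ.injective]
  congr 1
  ext w
  simp only [mem_neighborSet, Set.mem_image]
  exact ⟨fun h => ⟨φ.symm w, by simpa using φ.symm.map_rel_iff.2 h, by simp⟩,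
    by rintro ⟨u, hu, rfl⟩; exact φ.map_rel_iff.2 hu⟩

lemma maxDeg_iso [Fintype V] [Fintype W] (φ : G ≃g G') : maxDeg G' = maxDeg G :=
  le_antisymm (maxDeg_le fun w => by simpa [deg_iso] using deg_le_maxDeg (G := G) (φ.symm w))
    (maxDeg_le fun v => deg_iso φ v ▸ deg_le_maxDeg (φ v))

lemma Colorable.comap (φ : G ↪g G') {σ : Sym2 W → ℤ} (h : Colorable G' σ n) :
    Colorable G (fun e => σ (e.map φ)) n := by
  obtain ⟨f, hmem, hsign, hdist⟩ := h
  refine ⟨fun u e => f (φ u) (e.map φ), fun u v huv => ?_, fun u v huv => ?_,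
    fun u v w huv huw hvw => ?_⟩
  · exact hmem _ _ (φ.map_rel_iff.2 huv)
  · exact hsign _ _ (φ.map_rel_iff.2 huv)
  · exact hdist _ _ _ (φ.map_rel_iff.2 huv) (φ.map_rel_iff.2 huw) (φ.injective.ne hvw)

lemma colorable_iso_iff (φ : G ≃g G') {σ : Sym2 W → ℤ} :
    Colorable G' σ n ↔ Colorable G (fun e => σ (e.map φ)) n := by
  refine ⟨Colorable.comap φ.toEmbedding, fun h => ?_⟩
  convert h.comap φ.symm.toEmbedding using 2 with e
  induction e using Sym2.ind
  simp

lemma IsSignature.comap (φ : G ↪g G') {σ : Sym2 W → ℤ} (hσ : IsSignature G' σ) :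
    IsSignature G (fun e => σ (e.map φ)) := by
  intro e he
  induction e using Sym2.ind
  exact hσ _ (φ.map_rel_iff.2 he)

lemma Class2pm.of_iso [Fintype V] [Fintype W] (φ : G ≃g G') (h : Class2pm G) : Class2pm G' := by
  intro σ hσ
  rw [maxDeg_iso φ, ← h _ (hσ.comap φ.toEmbedding), chromIndex, chromIndex]
  simp_rw [colorable_iso_iff φ]
  rfl

end Isomorphism

section LinearForests

variable {V : Type*}

/-- A cover of the edges of `G` by `m` linear forests: `path p` is the sequence
`path p 0, …, path p (len p)`, of class `cls p`; positions of one class carry distinct vertices,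
and every edge joins two consecutive positions (consecutive positions need not be adjacent). -/
structure PathCover (G : SimpleGraph V) (m : ℕ) (ι : Type*) where
  cls : ι → Fin m
  len : ι → ℕ
  path : ι → ℕ → V
  injective : ∀ p q s t, cls p = cls q → s ≤ len p → t ≤ len q → path p s = path q t →
    p = q ∧ s = t
  cover : ∀ u v, G.Adj u v → ∃ p, ∃ t < len p, s(u, v) = s(path p t, path p (t + 1))

namespace PathCover

variable {G : SimpleGraph V} {m : ℕ} {ι : Type*} (C : PathCover G m ι) (σ : Sym2 V → ℤ)

/-- `σ` normalised to `±1`: a signature is arbitrary off the edges. -/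
def sign (e : Sym2 V) : ℤ := if σ e = -1 then -1 else 1

lemma natAbs_sign (e : Sym2 V) : (sign σ e).natAbs = 1 := by
  unfold sign; split_ifs <;> rfl

/-- The switching that makes `σ` positive along `path p`. -/
def switch (p : ι) (t : ℕ) : ℤ :=
  ∏ s ∈ Finset.range t, sign σ s(C.path p s, C.path p (s + 1))

lemma natAbs_switch (p : ι) (t : ℕ) : (C.switch σ p t).natAbs = 1 := by
  rw [switch, ← Int.natAbsHom_apply, map_prod]
  exact Finset.prod_eq_one fun s _ => natAbs_sign σ _

def tailColor (p : ι) (t : ℕ) : ℤ := ((C.cls p : ℕ) + 1) * C.switch σ p t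

lemma natAbs_tailColor (p : ι) (t : ℕ) : (C.tailColor σ p t).natAbs = C.cls p + 1 := by
  rw [tailColor, Int.natAbs_mul, natAbs_switch]
  omega

lemma tailColor_succ (p : ι) (t : ℕ) :
    C.tailColor σ p (t + 1) = C.tailColor σ p t * sign σ s(C.path p t, C.path p (t + 1)) := by
  rw [tailColor, tailColor, switch, switch, Finset.prod_range_succ, mul_assoc]

lemma tailColor_mul_neg_sign_ne (p : ι) (t : ℕ) :
    C.tailColor σ p t * -sign σ s(C.path p t, C.path p (t + 1)) ≠ C.tailColor σ p (t + 1) := by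
  have hT : C.tailColor σ p t ≠ 0 := fun h => by simpa [h] using C.natAbs_tailColor σ p t
  have hs : sign σ s(C.path p t, C.path p (t + 1)) ≠ 0 := fun h => by
    simpa [h] using natAbs_sign σ s(C.path p t, C.path p (t + 1))
  rw [tailColor_succ]
  intro h
  exact mul_ne_zero hT hs (by linarith)

lemma path_ne_succ (p : ι) {t : ℕ} (ht : t < C.len p) : C.path p t ≠ C.path p (t + 1) :=
  fun h => by simpa using (C.injective p p t (t + 1) rfl ht.le ht h).2

lemma natAbs_tailColor_mul (p : ι) (t : ℕ) (b : Prop) [Decidable b] (e : Sym2 V) :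
    (C.tailColor σ p t * if b then 1 else -sign σ e).natAbs = C.cls p + 1 := by
  rw [Int.natAbs_mul, natAbs_tailColor]
  split_ifs
  · rw [Int.natAbs_one, mul_one]
  · rw [Int.natAbs_neg, natAbs_sign, mul_one]

lemma sign_eq {σ : Sym2 V → ℤ} (hσ : IsSignature G σ) {e : Sym2 V} (he : e ∈ G.edgeSet) :
    sign σ e = σ e := by
  unfold sign; rcases hσ e he with h | h <;> simp [h]

variable [DecidableEq V]

open Classical in
/-- An edge at position `t` of `path p` gets `tailColor p t` at `path p t` and the colour forced
by its sign at `path p (t + 1)`; thanks to the switching, two consecutive edges get opposite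
colours at their common vertex. -/
noncomputable def coloring (u : V) (e : Sym2 V) : ℤ :=
  if h : ∃ pt : ι × ℕ, pt.2 < C.len pt.1 ∧ e = s(C.path pt.1 pt.2, C.path pt.1 (pt.2 + 1)) then
    C.tailColor σ h.choose.1 h.choose.2 *
      if u = C.path h.choose.1 h.choose.2 then 1 else -sign σ e
  else 0

lemma coloring_spec {u v : V} (huv : G.Adj u v) :
    ∃ p, ∃ t < C.len p, s(u, v) = s(C.path p t, C.path p (t + 1)) ∧ ∀ w,
      C.coloring σ w s(u, v) =
        C.tailColor σ p t * if w = C.path p t then 1 else -sign σ s(u, v) := by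
  obtain ⟨p, t, ht, he⟩ := C.cover u v huv
  have h : ∃ pt : ι × ℕ, pt.2 < C.len pt.1 ∧
      s(u, v) = s(C.path pt.1 pt.2, C.path pt.1 (pt.2 + 1)) := ⟨(p, t), ht, he⟩
  exact ⟨_, _, h.choose_spec.1, h.choose_spec.2, fun w => by rw [coloring, dif_pos h]⟩

lemma coloring_ne {u v w : V} (huv : G.Adj u v) (huw : G.Adj u w) (hvw : v ≠ w) :
    C.coloring σ u s(u, v) ≠ C.coloring σ u s(u, w) := by
  obtain ⟨p, t, ht, he, hcol⟩ := C.coloring_spec σ huv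
  obtain ⟨q, t', ht', he', hcol'⟩ := C.coloring_spec σ huw
  rw [hcol, hcol']
  by_cases hpq : C.cls p = C.cls q
  swap
  · intro h
    have := congrArg Int.natAbs h
    rw [natAbs_tailColor_mul, natAbs_tailColor_mul] at this
    exact hpq (Fin.ext (by omega))
  have hsame : ∀ a b, a ≤ C.len p → b ≤ C.len q → u = C.path p a → u = C.path q b →
      p = q ∧ a = b := fun a b ha hb h h' => C.injective p q a b hpq ha hb (h.symm.trans h')
  rcases Sym2.mem_iff.1 (he ▸ Sym2.mem_mk_left u v) with hu | hu <;>
    rcases Sym2.mem_iff.1 (he' ▸ Sym2.mem_mk_left u w) with hu' | hu'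
  · obtain ⟨rfl, rfl⟩ := hsame _ _ ht.le ht'.le hu hu'
    exact absurd (Sym2.congr_right.1 (he.trans he'.symm)) hvw
  · obtain ⟨rfl, rfl⟩ := hsame _ _ ht.le ht' hu hu'
    rw [if_pos hu, if_neg (hu' ▸ (C.path_ne_succ p ht').symm), he', mul_one]
    exact (C.tailColor_mul_neg_sign_ne σ p t').symm
  · obtain ⟨rfl, rfl⟩ := hsame _ _ ht ht'.le hu hu'
    rw [if_pos hu', if_neg (hu ▸ (C.path_ne_succ p ht).symm), he, mul_one]
    exact C.tailColor_mul_neg_sign_ne σ p t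
  · obtain ⟨rfl, h⟩ := hsame _ _ ht ht' hu hu'
    obtain rfl : t = t' := by omega
    exact absurd (Sym2.congr_right.1 (he.trans he'.symm)) hvw

variable {σ}

theorem isEdgeColoring (hσ : IsSignature G σ) : IsEdgeColoring G σ (2 * m) (C.coloring σ) := by
  refine ⟨fun u v huv => ?_, fun u v huv => ?_, fun u v w huv huw hvw => ?_⟩
  · obtain ⟨p, t, -, -, hcol⟩ := C.coloring_spec σ huv
    have := hcol u ▸ C.natAbs_tailColor_mul σ p t _ _
    refine ⟨by omega, fun _ h0 => ?_⟩
    rw [h0] at this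
    omega
  · obtain ⟨p, t, ht, he, hcol⟩ := C.coloring_spec σ huv
    have hne := C.path_ne_succ p ht
    have hsq : σ s(u, v) * σ s(u, v) = 1 := by rcases hσ s(u, v) huv with h | h <;> simp [h]
    rw [hcol, hcol, sign_eq hσ huv]
    rcases Sym2.eq_iff.1 he with ⟨rfl, rfl⟩ | ⟨rfl, rfl⟩
    · rw [if_pos rfl, if_neg hne.symm]
      linear_combination (-(C.tailColor σ p t)) * hsq
    · rw [if_pos rfl, if_neg hne.symm]
      ring
  · exact C.coloring_ne σ huv huw hvw

end PathCover

theorem PathCover.colorable {G : SimpleGraph V} {m : ℕ} {ι : Type*} (C : PathCover G m ι)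
    {σ : Sym2 V → ℤ} (hσ : IsSignature G σ) : Colorable G σ (2 * m) := by
  classical
  exact ⟨_, C.isEdgeColoring hσ⟩

end LinearForests

/-- `0, 1, -1, 2, -2, …` -/
def zigzag (j : ℕ) : ℤ := if j % 2 = 0 then -((j / 2 : ℕ) : ℤ) else ((j + 1) / 2 : ℕ)

lemma zigzag_add_zigzag_succ (j : ℕ) :
    zigzag j + zigzag (j + 1) = if j % 2 = 0 then 1 else 0 := by
  unfold zigzag; split_ifs <;> omega

lemma natCast_add_natCast_eq_zero (n : ℕ) : (n : ZMod (2 * n)) + n = 0 := by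
  rw [← two_mul]
  exact_mod_cast ZMod.natCast_self (2 * n)

section Offset

variable (n : ℕ)

def offset (h : Bool) (j : ℕ) : ℤ := (if h then n else 0) + zigzag j

/-- The `j`-th vertex, counted from the middle, of the first (`h = false`) or second half of the
class-`c` path of `K_{2n}`; the two halves start at `c` and `c + n`. -/
def pathVertex {n : ℕ} (c : ℕ) (h : Bool) (j : ℕ) : ZMod (2 * n) :=
  (c : ZMod (2 * n)) + offset n h j

lemma offset_injective {h h' : Bool} {j j' : ℕ} (hj : j < n) (hj' : j' < n)
    (H : (offset n h j : ZMod (2 * n)) = offset n h' j') : h = h' ∧ j = j' := by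
  rw [ZMod.intCast_eq_intCast_iff_dvd_sub] at H
  have hlt : |offset n h' j' - offset n h j| < ((2 * n : ℕ) : ℤ) := by
    rw [abs_lt]; unfold offset zigzag; push_cast; split_ifs <;> omega
  have := Int.eq_zero_of_abs_lt_dvd H hlt
  unfold offset zigzag at this
  cases h <;> cases h' <;>
    simp only [Bool.false_eq_true, Bool.true_eq_false, reduceIte, true_and, false_and] at this ⊢ <;>
    split_ifs at this <;> omega

lemma pathVertex_injective {c : ℕ} {h h' : Bool} {j j' : ℕ} (hj : j < n) (hj' : j' < n)
    (H : (pathVertex c h j : ZMod (2 * n)) = pathVertex c h' j') : h = h' ∧ j = j' :=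
  offset_injective n hj hj' (add_left_cancel H)

lemma exists_eq_offset [NeZero n] (z : ZMod (2 * n)) : ∃ h, ∃ j < n, z = offset n h j := by
  let F : Bool × Fin n → ZMod (2 * n) := fun p => offset n p.1 p.2
  have hF : F.Bijective := by
    refine (Fintype.bijective_iff_injective_and_card F).2 ⟨fun p q hpq => ?_, ?_⟩
    · obtain ⟨h1, h2⟩ := offset_injective n p.2.2 q.2.2 hpq
      exact Prod.ext h1 (Fin.ext h2)
    · simp [ZMod.card, two_mul]
  obtain ⟨⟨h, j⟩, rfl⟩ := hF.2 z
  exact ⟨h, j, j.2, rfl⟩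

lemma intCast_offset (h : Bool) (j : ℕ) :
    (offset n h j : ZMod (2 * n)) = (if h then (n : ZMod (2 * n)) else 0) + zigzag j := by
  unfold offset; cases h <;> simp

lemma two_mul_ite_eq_zero (h : Bool) : 2 * (if h then (n : ZMod (2 * n)) else 0) = 0 := by
  cases h
  · simp
  · rw [if_pos rfl, two_mul (n : ZMod (2 * n)), natCast_add_natCast_eq_zero]

lemma intCast_zigzag_succ_eq_add {j : ℕ} (hj : j + 1 = n) :
    ((zigzag (j + 1) : ℤ) : ZMod (2 * n)) = zigzag j + n := by
  have hd : zigzag (j + 1) - zigzag j = n ∨ zigzag (j + 1) - zigzag j = -n := by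
    unfold zigzag; split_ifs <;> omega
  rcases hd with hd | hd <;> have hd' := congrArg (Int.cast : ℤ → ZMod (2 * n)) hd <;>
    push_cast at hd'
  · linear_combination hd'
  · linear_combination hd' - natCast_add_natCast_eq_zero n

/-- The class of a non-antipodal edge `x y` is read off `x + y`: the edges of the class-`c` path
outside its middle have `x + y ∈ {2c, 2c + 1}`. -/
lemma exists_eq_consecutive_pathVertex [NeZero n] {x y : ZMod (2 * n)} (hxy : x ≠ y)
    (hanti : y ≠ x + n) :
    ∃ c < n, ∃ h, ∃ j, j + 1 < n ∧
      s(x, y) = s(pathVertex c h j, pathVertex c h (j + 1)) := by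
  set S := (x + y).val
  have hS : S < 2 * n := ZMod.val_lt _
  have hsum : x + y = ((2 * (S / 2) + S % 2 : ℕ) : ZMod (2 * n)) := by
    rw [Nat.div_add_mod]; exact (ZMod.natCast_zmod_val _).symm
  set ε := S % 2
  obtain ⟨h, j, hj, hx⟩ := exists_eq_offset n (x - (S / 2 : ℕ))
  refine ⟨S / 2, by omega, h, ?_⟩
  simp only [pathVertex, intCast_offset] at hx ⊢
  set a : ZMod (2 * n) := if h then (n : ZMod (2 * n)) else 0
  have hy : y = ((S / 2 : ℕ) : ZMod (2 * n)) + a + (((ε : ℕ) : ℤ) - zigzag j : ℤ) := by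
    rw [sub_eq_iff_eq_add'] at hx
    push_cast at hsum ⊢
    linear_combination hsum - hx - two_mul_ite_eq_zero n h
  rw [sub_eq_iff_eq_add'] at hx
  have hε2 : ε < 2 := Nat.mod_lt _ two_pos
  by_cases hpar : (ε : ℤ) = if j % 2 = 0 then 1 else 0
  · have hz : (ε : ℤ) - zigzag j = zigzag (j + 1) := by
      rw [hpar, ← zigzag_add_zigzag_succ j]; ring
    rw [hz] at hy
    by_cases hjn : j + 1 < n
    · exact ⟨j, hjn, by rw [hx, hy, add_assoc]⟩
    · refine absurd ?_ hanti
      rw [hy, hx, intCast_zigzag_succ_eq_add n (by omega)]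
      ring
  · obtain _ | j := j
    · refine absurd ?_ hxy
      have : ε = 0 := by simp at hpar; omega
      rw [hx, hy, this]; simp [zigzag]
    · have hz : (ε : ℤ) - zigzag (j + 1) = zigzag j := by
        have := zigzag_add_zigzag_succ j
        split_ifs at hpar this <;> omega
      rw [hz] at hy
      exact ⟨j, hj, by rw [hx, hy, add_assoc, Sym2.eq_swap]⟩

lemma offset_zero (h : Bool) : offset n h 0 = if h then (n : ℤ) else 0 := by
  simp [offset, zigzag]

lemma exists_eq_pathVertex_zero [NeZero n] (x : ZMod (2 * n)) :
    ∃ c < n, ∃ h, x = pathVertex c h 0 := by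
  have hx := ZMod.val_lt x
  by_cases hv : x.val < n
  · exact ⟨x.val, hv, false, by simp [pathVertex, offset_zero]⟩
  · refine ⟨x.val - n, by omega, true, ?_⟩
    rw [pathVertex, offset_zero, if_pos rfl, Nat.cast_sub (by omega)]
    simp

end Offset

section Gadget

variable (n : ℕ)

def gadget : SimpleGraph (Option (ZMod (2 * n))) where
  Adj u v := match u, v with
    | some x, some y => x ≠ y ∧ (y = x + n → x = 0 ∨ x = n)
    | some x, none => x ≠ 0 ∧ x ≠ n
    | none, some y => y ≠ 0 ∧ y ≠ n
    | none, none => False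
  symm := by
    constructor
    rintro (_ | x) (_ | y) h
    · exact h
    · exact h
    · exact h
    · refine ⟨h.1.symm, fun hxy => ?_⟩
      have hyx : y = x + n := by rw [hxy, add_assoc, natCast_add_natCast_eq_zero, add_zero]
      rcases h.2 hyx with rfl | rfl
      · right; simpa using hyx
      · left; rw [hyx, natCast_add_natCast_eq_zero]
  loopless := ⟨by rintro (_ | x) h; exacts [h, h.1 rfl]⟩

@[simp] lemma gadget_adj_some_some {x y : ZMod (2 * n)} :
    (gadget n).Adj (some x) (some y) ↔ x ≠ y ∧ (y = x + n → x = 0 ∨ x = n) := Iff.rfl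

@[simp] lemma gadget_adj_some_none {x : ZMod (2 * n)} :
    (gadget n).Adj (some x) none ↔ x ≠ 0 ∧ x ≠ n := Iff.rfl

@[simp] lemma gadget_adj_none_some {y : ZMod (2 * n)} :
    (gadget n).Adj none (some y) ↔ y ≠ 0 ∧ y ≠ n := Iff.rfl

def doubleGadget : SimpleGraph (Option (Bool × Option (ZMod (2 * n)))) where
  Adj u v := match u, v with
    | some (b, x), some (b', y) => b = b' ∧ (gadget n).Adj x y
    | some (_, x), none => x = none
    | none, some (_, y) => y = none
    | none, none => False
  symm := by
    constructor
    rintro (_ | ⟨b, x⟩) (_ | ⟨b', y⟩) h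
    · exact h
    · exact h
    · exact h
    · exact ⟨h.1.symm, h.2.symm⟩
  loopless := ⟨by rintro (_ | ⟨b, x⟩) h; exacts [h, (gadget n).loopless.irrefl x h.2]⟩

@[simp] lemma doubleGadget_adj_some_some {b b' : Bool} {x y : Option (ZMod (2 * n))} :
    (doubleGadget n).Adj (some (b, x)) (some (b', y)) ↔ b = b' ∧ (gadget n).Adj x y := Iff.rfl

@[simp] lemma doubleGadget_adj_some_none {b : Bool} {x : Option (ZMod (2 * n))} :
    (doubleGadget n).Adj (some (b, x)) none ↔ x = none := Iff.rfl

@[simp] lemma doubleGadget_adj_none_some {b : Bool} {y : Option (ZMod (2 * n))} :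
    (doubleGadget n).Adj none (some (b, y)) ↔ y = none := Iff.rfl

section GadgetPath

variable {n}

/-- The class-`c` path: its first half reversed, the root unless `c = 0`, then its second half. -/
def gadgetPath (c : Fin n) (t : ℕ) : Option (ZMod (2 * n)) :=
  if t < n then some (pathVertex c false (n - 1 - t))
  else if c.val = 0 then some (pathVertex c true (t - n))
  else if t = n then none
  else some (pathVertex c true (t - n - 1))

def gadgetLen (c : Fin n) : ℕ := if c.val = 0 then 2 * n - 1 else 2 * n

lemma gadgetPath_of_lt (c : Fin n) {t : ℕ} (ht : t < n) :
    gadgetPath c t = some (pathVertex c false (n - 1 - t)) := if_pos ht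

lemma gadgetPath_of_eq_zero {c : Fin n} (hc : c.val = 0) {t : ℕ} (ht : n ≤ t) :
    gadgetPath c t = some (pathVertex c true (t - n)) := by
  rw [gadgetPath, if_neg (by omega), if_pos hc]

lemma gadgetPath_self {c : Fin n} (hc : c.val ≠ 0) : gadgetPath c n = none := by
  rw [gadgetPath, if_neg (by omega), if_neg hc, if_pos rfl]

lemma gadgetPath_of_gt {c : Fin n} (hc : c.val ≠ 0) {t : ℕ} (ht : n < t) :
    gadgetPath c t = some (pathVertex c true (t - n - 1)) := by
  rw [gadgetPath, if_neg (by omega), if_neg hc, if_neg (by omega)]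

lemma gadgetPath_ne_none {c : Fin n} (hc : c.val = 0) (t : ℕ) : gadgetPath c t ≠ none := by
  unfold gadgetPath; split_ifs <;> simp

lemma gadgetPath_injective {c : Fin n} {s t : ℕ} (hs : s ≤ gadgetLen c) (ht : t ≤ gadgetLen c)
    (h : gadgetPath c s = gadgetPath c t) : s = t := by
  unfold gadgetLen at hs ht
  unfold gadgetPath at h
  split_ifs at h hs ht <;> simp only [Option.some.injEq] at h <;>
    first
    | omega
    | (obtain ⟨h1, h2⟩ := pathVertex_injective n (by omega) (by omega) h
       first | omega | cases h1)

lemma exists_gadgetPath_eq_consecutive (c : Fin n) (h : Bool) {j : ℕ} (hj : j + 1 < n) :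
    ∃ t < gadgetLen c, s(some (pathVertex c h j), some (pathVertex c h (j + 1))) =
      s(gadgetPath c t, gadgetPath c (t + 1)) := by
  unfold gadgetLen
  cases h
  · refine ⟨n - 2 - j, by split_ifs <;> omega, ?_⟩
    rw [gadgetPath_of_lt c (by omega), gadgetPath_of_lt c (by omega),
      show n - 1 - (n - 2 - j) = j + 1 by omega, show n - 1 - (n - 2 - j + 1) = j by omega,
      Sym2.eq_swap]
  · by_cases hc : c.val = 0
    · refine ⟨n + j, by rw [if_pos hc]; omega, ?_⟩
      rw [gadgetPath_of_eq_zero hc (by omega), gadgetPath_of_eq_zero hc (by omega),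
        show n + j - n = j by omega, show n + j + 1 - n = j + 1 by omega]
    · refine ⟨n + 1 + j, by rw [if_neg hc]; omega, ?_⟩
      rw [gadgetPath_of_gt hc (by omega), gadgetPath_of_gt hc (by omega),
        show n + 1 + j - n - 1 = j by omega, show n + 1 + j + 1 - n - 1 = j + 1 by omega]

lemma exists_gadgetPath_eq_root {c : Fin n} (hc : c.val ≠ 0) (h : Bool) :
    ∃ t < gadgetLen c,
      s(some (pathVertex c h 0), none) = s(gadgetPath c t, gadgetPath c (t + 1)) := by
  have hn : 0 < n := by omega
  unfold gadgetLen
  rw [if_neg hc]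
  cases h
  · refine ⟨n - 1, by omega, ?_⟩
    rw [gadgetPath_of_lt c (by omega), Nat.sub_add_cancel hn, gadgetPath_self hc, Nat.sub_self]
  · refine ⟨n, by omega, ?_⟩
    rw [gadgetPath_self hc, gadgetPath_of_gt hc (by omega), Nat.add_sub_cancel_left, Nat.sub_self,
      Sym2.eq_swap]

lemma gadgetPath_zero_middle [NeZero n] :
    s(gadgetPath (0 : Fin n) (n - 1), gadgetPath (0 : Fin n) n) =
      s(some 0, some (n : ZMod (2 * n))) := by
  have hn : 0 < n := Nat.pos_of_ne_zero (NeZero.ne n)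
  rw [gadgetPath_of_lt _ (by omega), gadgetPath_of_eq_zero rfl le_rfl, Nat.sub_self, Nat.sub_self]
  simp [pathVertex, offset_zero]

lemma gadget_cover [NeZero n] {u v : Option (ZMod (2 * n))} (huv : (gadget n).Adj u v) :
    ∃ c, ∃ t < gadgetLen c, s(u, v) = s(gadgetPath c t, gadgetPath c (t + 1)) := by
  have hn : 0 < n := Nat.pos_of_ne_zero (NeZero.ne n)
  have root : ∀ x : ZMod (2 * n), x ≠ 0 → x ≠ n →
      ∃ c, ∃ t < gadgetLen c, s(some x, none) = s(gadgetPath c t, gadgetPath c (t + 1)) := by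
    intro x hx0 hxn
    obtain ⟨c, hc, h, rfl⟩ := exists_eq_pathVertex_zero n x
    have hc0 : c ≠ 0 := by
      rintro rfl
      cases h <;> simp [pathVertex, offset_zero] at hx0 hxn
    exact ⟨⟨c, hc⟩, exists_gadgetPath_eq_root (c := ⟨c, hc⟩) hc0 h⟩
  rcases u with _ | x <;> rcases v with _ | y
  · exact huv.elim
  · obtain ⟨c, t, ht, he⟩ := root y huv.1 huv.2
    exact ⟨c, t, ht, Sym2.eq_swap.trans he⟩
  · exact root x huv.1 huv.2
  · by_cases hanti : y = x + n
    · refine ⟨0, n - 1, by simp only [gadgetLen, Fin.val_zero, if_pos]; omega, ?_⟩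
      rw [Nat.sub_add_cancel hn, gadgetPath_zero_middle, hanti]
      rcases huv.2 hanti with rfl | rfl
      · rw [zero_add]
      · rw [natCast_add_natCast_eq_zero, Sym2.eq_swap]
    · obtain ⟨c, hc, h, j, hj, he⟩ := exists_eq_consecutive_pathVertex n huv.1 hanti
      obtain ⟨t, ht, he'⟩ := exists_gadgetPath_eq_consecutive ⟨c, hc⟩ h hj
      refine ⟨⟨c, hc⟩, t, ht, ?_⟩
      rw [← he']
      rcases Sym2.eq_iff.1 he with ⟨rfl, rfl⟩ | ⟨rfl, rfl⟩
      · rfl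
      · exact Sym2.eq_swap

end GadgetPath

end Gadget

/-- The gadget paths of both copies, in `n` classes; the path through the centre joins class `0`. -/
def doubleGadgetCover (n : ℕ) [NeZero n] :
    PathCover (doubleGadget n) n (Option (Bool × Fin n)) where
  cls p := p.elim 0 Prod.snd
  len p := p.elim 2 fun bc => gadgetLen bc.2
  path p t := match p with
    | none => if t = 0 then some (false, none) else if t = 1 then none else some (true, none)
    | some (b, c) => some (b, gadgetPath c t)
  injective := by
    rintro (_ | ⟨b, c⟩) (_ | ⟨b', c'⟩) s t hcls hs ht h
    · simp only [Option.elim_none] at hs ht h ⊢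
      split_ifs at h <;> simp_all
      omega
    · simp only [Option.elim_none, Option.elim_some] at hcls h
      have := gadgetPath_ne_none (c := c') (by rw [← hcls]; rfl) t
      split_ifs at h <;> simp_all
    · simp only [Option.elim_none, Option.elim_some] at hcls h
      have := gadgetPath_ne_none (c := c) (by rw [hcls]; rfl) s
      split_ifs at h <;> simp_all
    · simp only [Option.elim_some, Option.some.injEq, Prod.mk.injEq] at hcls hs ht h
      subst hcls
      exact ⟨by rw [h.1], gadgetPath_injective hs ht h.2⟩
  cover := by
    rintro (_ | ⟨b, u⟩) (_ | ⟨b', v⟩) huv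
    · exact huv.elim
    · rw [doubleGadget_adj_none_some] at huv
      subst huv
      refine ⟨none, if b' then 1 else 0, by cases b' <;> simp, ?_⟩
      cases b' <;> simp [Sym2.eq_swap]
    · rw [doubleGadget_adj_some_none] at huv
      subst huv
      refine ⟨none, if b then 1 else 0, by cases b <;> simp, ?_⟩
      cases b <;> simp [Sym2.eq_swap]
    · obtain ⟨rfl, huv⟩ := huv
      obtain ⟨c, t, ht, he⟩ := gadget_cover huv
      refine ⟨some (b, c), t, ht, ?_⟩
      simpa using congrArg (Sym2.map fun w => some (b, w)) he

section DoubleGadget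

variable (n : ℕ)

lemma neighborSet_doubleGadget_some (b : Bool) (u : Option (ZMod (2 * n))) :
    (doubleGadget n).neighborSet (some (b, u)) =
      (fun w => some (b, w)) '' (gadget n).neighborSet u ∪ {w | u = none ∧ w = none} := by
  ext (_ | ⟨b', w⟩)
  · simp
  · simp only [mem_neighborSet, doubleGadget_adj_some_some, Set.mem_union, Set.mem_image,
      Option.some.injEq, Prod.mk.injEq, Set.mem_ofPred_eq, reduceCtorEq, and_false, or_false]
    exact ⟨fun ⟨hb, h⟩ => ⟨w, h, hb, rfl⟩, fun ⟨w', h, hb, hw⟩ => ⟨hb, hw ▸ h⟩⟩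

lemma deg_doubleGadget_none : deg (doubleGadget n) none = 2 := by
  have : (doubleGadget n).neighborSet none = {some (false, none), some (true, none)} := by
    ext (_ | ⟨b, w⟩)
    · simp
    · cases b <;> simp [eq_comm]
  rw [deg, this, Set.ncard_pair (by simp)]

variable [NeZero n]

lemma natCast_ne_zero_zmod_two_mul : (n : ZMod (2 * n)) ≠ 0 := by
  intro h
  have := congrArg ZMod.val h
  rw [ZMod.val_cast_of_lt (by have := NeZero.ne n; omega), ZMod.val_zero] at this
  exact NeZero.ne n this

lemma ncard_compl_zmod (s : Set (ZMod (2 * n))) : sᶜ.ncard = 2 * n - s.ncard := by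
  rw [Set.ncard_compl, Nat.card_zmod]

lemma deg_gadget_some (x : ZMod (2 * n)) : deg (gadget n) (some x) = 2 * n - 1 := by
  by_cases hx : x = 0 ∨ x = n
  · have : (gadget n).neighborSet (some x) = some '' {x}ᶜ := by
      ext (_ | y)
      · simpa [or_iff_not_imp_left] using hx
      · simp [eq_comm, hx]
    rw [deg, this, Set.ncard_image_of_injective _ (Option.some_injective _), ncard_compl_zmod,
      Set.ncard_singleton]
  · have : (gadget n).neighborSet (some x) = insert none (some '' {x, x + n}ᶜ) := by
      ext (_ | y)
      · simpa [not_or] using hx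
      · simp only [mem_neighborSet, gadget_adj_some_some, Set.mem_insert_iff, reduceCtorEq,
          Set.mem_image, Set.mem_compl_iff, Set.mem_insert_iff, Set.mem_singleton_iff,
          Option.some.injEq, exists_eq_right, false_or, not_or]
        constructor
        · rintro ⟨hxy, hanti⟩
          exact ⟨Ne.symm hxy, fun h => hx (hanti h)⟩
        · rintro ⟨hxy, hanti⟩
          exact ⟨Ne.symm hxy, fun h => absurd h hanti⟩
    have hne : x ≠ x + n := fun h => natCast_ne_zero_zmod_two_mul n (by linear_combination -h)
    rw [deg, this, Set.ncard_insert_of_notMem (by simp), Set.ncard_image_of_injective _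
      (Option.some_injective _), ncard_compl_zmod, Set.ncard_pair hne]
    have := NeZero.ne n
    omega

lemma deg_gadget_none : deg (gadget n) none = 2 * n - 2 := by
  have : (gadget n).neighborSet none = some '' {0, (n : ZMod (2 * n))}ᶜ := by
    ext (_ | y)
    · simp
    · simp [eq_comm]
  rw [deg, this, Set.ncard_image_of_injective _ (Option.some_injective _), ncard_compl_zmod,
    Set.ncard_pair (natCast_ne_zero_zmod_two_mul n).symm]

lemma deg_doubleGadget_some (b : Bool) (u : Option (ZMod (2 * n))) :
    deg (doubleGadget n) (some (b, u)) = 2 * n - 1 := by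
  have hinj : Function.Injective fun w : Option (ZMod (2 * n)) => some (b, w) :=
    fun w w' h => by simpa using h
  rw [deg, neighborSet_doubleGadget_some]
  rcases u with _ | x
  · have : {w : Option (Bool × Option (ZMod (2 * n))) | (none : Option (ZMod (2 * n))) = none ∧
        w = none} = {none} := by ext; simp
    rw [this, Set.union_singleton, Set.ncard_insert_of_notMem (by simp),
      Set.ncard_image_of_injective _ hinj, ← deg, deg_gadget_none]
    have := NeZero.ne n
    omega
  · simp only [reduceCtorEq, false_and, Set.ofPred_false, Set.union_empty]
    rw [Set.ncard_image_of_injective _ hinj, ← deg, deg_gadget_some]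

lemma maxDeg_doubleGadget (hn : 2 ≤ n) : maxDeg (doubleGadget n) = 2 * n - 1 := by
  refine le_antisymm (maxDeg_le ?_) ?_
  · rintro (_ | ⟨b, u⟩)
    · rw [deg_doubleGadget_none]; omega
    · rw [deg_doubleGadget_some]
  · exact deg_doubleGadget_some n false none ▸ deg_le_maxDeg _

lemma IsEdgeColoring.doubleGadget_root_eq_zero
    {σ : Sym2 (Option (Bool × Option (ZMod (2 * n)))) → ℤ}
    {f : Option (Bool × Option (ZMod (2 * n))) → Sym2 (Option (Bool × Option (ZMod (2 * n)))) → ℤ}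
    (hf : IsEdgeColoring (doubleGadget n) σ (2 * n - 1) f) (b : Bool) :
    f (some (b, none)) s(some (b, none), none) = 0 := by
  let S : Finset (Option (Bool × Option (ZMod (2 * n)))) := Finset.univ.image fun u => some (b, u)
  have hS : Odd S.card := by
    rw [Finset.card_image_of_injective _ fun u u' h => by simpa using h, Finset.card_univ,
      Fintype.card_option, ZMod.card]
    exact ⟨n, rfl⟩
  have hodd : Odd (2 * n - 1) := ⟨n - 1, by have := NeZero.ne n; omega⟩
  obtain ⟨u, hu, v, hv, huv, h0⟩ := hf.exists_zero_edge_leaving hS fun u hu => by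
    obtain ⟨w, -, rfl⟩ := Finset.mem_image.1 hu
    exact hf.exists_adj_eq_zero hodd (deg_doubleGadget_some n b w).ge
  obtain ⟨w, -, rfl⟩ := Finset.mem_image.1 hu
  rcases v with _ | ⟨b', w'⟩
  · rw [doubleGadget_adj_some_none] at huv
    rwa [huv] at h0
  · exact absurd (Finset.mem_image.2 ⟨w', Finset.mem_univ _, by rw [huv.1]⟩) hv

theorem not_colorable_doubleGadget {σ : Sym2 (Option (Bool × Option (ZMod (2 * n)))) → ℤ}
    {m : ℕ} (hm : m < 2 * n) : ¬ Colorable (doubleGadget n) σ m := by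
  rintro ⟨f, hf⟩
  have hdeg := hf.deg_le (some (false, none))
  rw [deg_doubleGadget_some] at hdeg
  obtain rfl : m = 2 * n - 1 := by omega
  have hcentre : ∀ b, f none s(none, some (b, none)) = 0 := fun b => by
    rw [Sym2.eq_swap]
    exact hf.eq_zero_of_eq_zero (by simp) (hf.doubleGadget_root_eq_zero n b)
  exact hf.2.2 none _ _ (by simp) (by simp) (by simp) ((hcentre false).trans (hcentre true).symm)

theorem class2pm_doubleGadget (hn : 2 ≤ n) : Class2pm (doubleGadget n) := by
  intro σ hσ
  rw [maxDeg_doubleGadget n hn, Nat.sub_add_cancel (by omega)]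
  exact chromIndex_eq_of_colorable ((doubleGadgetCover n).colorable hσ)
    fun m hm => not_colorable_doubleGadget n hm

end DoubleGadget

end Signed

/-- For every `k ≥ 1` there is a graph of class `2^±` with maximum degree `2k+1`. -/
theorem exists_class2_graph (k : ℕ) (hk : 1 ≤ k) :
    ∃ (n : ℕ) (G : SimpleGraph (Fin n)), maxDeg G = 2 * k + 1 ∧ Class2pm G := by
  let G := doubleGadget (k + 1)
  refine ⟨_, G.overFin rfl, ?_, (class2pm_doubleGadget _ (by omega)).of_iso (G.overFinIso rfl)⟩
  rw [maxDeg_iso (G.overFinIso rfl), maxDeg_doubleGadget _ (by omega)]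
  omega
end

section
/- The wheel W_4 = K_4 is of class 1^±: for every signature σ on K_4, χ'(K_4, σ) = 3. Specifically, for any σ, K_4 decomposes into a perfect matching and a balanced spanning 4-cycle. -/
open SimpleGraph

open Signed SimpleGraph

/-!
Every edge of `K₄` lies on exactly two of its three Hamiltonian 4-cycles, so the product of the
signs of the three cycles is a square; hence one of them, `π 0 π 1 π 2 π 3`, is balanced, and its
complement is the perfect matching of its diagonals. A balanced cycle is switched to an
all-positive one by a potential `θ : V → {±1}` with `σ(uv) = θ u * θ v`. Orienting the cycle, the
edge leaving `u` gets the colour `θ u` at `u`, the edge entering `u` gets `-θ u`, and the diagonals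
get `0`: a `3`-edge-colouring. Three colours are needed because a vertex meets three edges.
-/

namespace Signed

section General

variable {V : Type*}

lemma IsSignature.mul_self_eq_one {G : SimpleGraph V} {σ : Sym2 V → ℤ} (hσ : IsSignature G σ)
    {u v : V} (h : G.Adj u v) : σ s(u, v) * σ s(u, v) = 1 :=
  mul_self_eq_one_iff.mpr (hσ _ h)

lemma prod_map_edges_eq_of_potential {H : SimpleGraph V} {σ : Sym2 V → ℤ} {θ : V → ℤ}
    (hθ : ∀ v, θ v * θ v = 1) (hσ : ∀ u v, H.Adj u v → σ s(u, v) = θ u * θ v) :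
    ∀ {u v : V} (w : H.Walk u v), (w.edges.map σ).prod = θ u * θ v
  | _, _, .nil => (hθ _).symm
  | u, v, .cons (v := x) h p => by
    rw [Walk.edges_cons, List.map_cons, List.prod_cons, prod_map_edges_eq_of_potential hθ hσ p,
      hσ _ _ h]
    linear_combination θ u * θ v * hθ x

lemma Balanced.of_potential {H : SimpleGraph V} {σ : Sym2 V → ℤ} {θ : V → ℤ}
    (hθ : ∀ v, θ v * θ v = 1) (hσ : ∀ u v, H.Adj u v → σ s(u, v) = θ u * θ v) :
    Balanced H σ := fun u w _ => (prod_map_edges_eq_of_potential hθ hσ w).trans (hθ u)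

lemma finite_colorSet (n : ℕ) : (colorSet n).Finite :=
  (Set.finite_Icc (-(n : ℤ)) n).subset fun _ ⟨hm, _⟩ => by constructor <;> omega

lemma ncard_colorSet_le (n : ℕ) : (colorSet n).ncard ≤ n := by
  let code : ℤ → ℕ := fun m =>
    2 * m.natAbs - (if 0 < m then 1 else 0) - (if n % 2 = 0 then 1 else 0)
  calc (colorSet n).ncard ≤ (↑(Finset.range n) : Set ℕ).ncard := by
        refine Set.ncard_le_ncard_of_injOn code ?_ ?_
        · intro m ⟨hm, hm0⟩
          rw [Nat.even_iff] at hm0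
          simp only [Finset.coe_range, Set.mem_Iio, code]
          split_ifs <;> omega
        · intro m ⟨hm, hm0⟩ m' ⟨hm', hm0'⟩ h
          rw [Nat.even_iff] at hm0 hm0'
          simp only [code] at h
          split_ifs at h <;> omega
    _ = n := by rw [Set.ncard_coe_finset, Finset.card_range]

lemma mem_colorSet_three {m : ℤ} : m ∈ colorSet 3 ↔ m.natAbs ≤ 1 :=
  ⟨fun h => by have := h.1; omega, fun h => ⟨by omega, fun h3 => absurd h3 (by decide)⟩⟩

lemma deg_le_of_colorable {G : SimpleGraph V} {σ : Sym2 V → ℤ} {n : ℕ}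
    (h : Colorable G σ n) (v : V) : deg G v ≤ n := by
  obtain ⟨f, hcol, -, hdist⟩ := h
  calc deg G v ≤ (colorSet n).ncard :=
        Set.ncard_le_ncard_of_injOn (fun w => f v s(v, w)) (fun w hw => hcol v w hw)
          (fun w hw w' hw' h => by_contra fun hne => hdist v w w' hw hw' hne h)
          (finite_colorSet n)
    _ ≤ n := ncard_colorSet_le n

lemma chromIndex_eq_deg_of_colorable {G : SimpleGraph V} {σ : Sym2 V → ℤ} (v : V)
    (h : Colorable G σ (deg G v)) : chromIndex G σ = deg G v :=
  IsLeast.csInf_eq ⟨h, fun _ hn => deg_le_of_colorable hn v⟩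

lemma deg_top [Finite V] (v : V) : deg (⊤ : SimpleGraph V) v = Nat.card V - 1 := by
  rw [deg, neighborSet_top, Set.ncard_compl, Set.ncard_singleton]

end General

lemma exists_prod_fourCycle_eq_one {σ : Sym2 (Fin 4) → ℤ}
    (hσ : IsSignature (completeGraph (Fin 4)) σ) :
    ∃ π : Equiv.Perm (Fin 4), ∏ i, σ s(π i, π (i + 1)) = 1 := by
  set c : Equiv.Perm (Fin 4) → ℤ := fun π => ∏ i, σ s(π i, π (i + 1))
  have hc (π : Equiv.Perm (Fin 4)) : c π * c π = 1 := by
    rw [← Finset.prod_mul_distrib]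
    exact Finset.prod_eq_one fun i _ => hσ.mul_self_eq_one (π.injective.ne (by decide +revert))
  have hprod : c 1 * c (Equiv.swap 2 3) * c (Equiv.swap 1 2) =
      (σ s(0, 1) * σ s(0, 2) * σ s(0, 3) * σ s(1, 2) * σ s(1, 3) * σ s(2, 3)) ^ 2 := by
    simp only [c, Fin.prod_univ_four, Fin.isValue, zero_add, Fin.reduceAdd, Equiv.Perm.coe_one,
      id_eq, ne_eq, Fin.reduceEq, not_false_eq_true, Equiv.swap_apply_of_ne_of_ne,
      Equiv.swap_apply_left, Equiv.swap_apply_right]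
    rw [Sym2.eq_swap (a := 3) (b := 0), Sym2.eq_swap (a := 3) (b := 2),
      Sym2.eq_swap (a := 2) (b := 0), Sym2.eq_swap (a := 2) (b := 1)]
    ring
  by_contra! h
  have hneg (π) : c π = -1 := (mul_self_eq_one_iff.mp (hc π)).resolve_left (h π)
  rw [hneg, hneg, hneg] at hprod
  nlinarith [sq_nonneg (σ s(0, 1) * σ s(0, 2) * σ s(0, 3) * σ s(1, 2) * σ s(1, 3) * σ s(2, 3))]

lemma exists_potential_of_prod_eq_one (s : Fin 4 → ℤ) (hs : ∀ i, s i * s i = 1)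
    (h : ∏ i, s i = 1) : ∃ θ : Fin 4 → ℤ, (∀ i, θ i * θ i = 1) ∧ ∀ i, s i = θ i * θ (i + 1) := by
  rw [Fin.prod_univ_four] at h
  refine ⟨![1, s 0, s 0 * s 1, s 0 * s 1 * s 2], fun i => ?_, fun i => ?_⟩ <;> fin_cases i
  all_goals simp only [Fin.isValue, Fin.zero_eta, Fin.mk_one, Fin.reduceFinMk, Matrix.cons_val,
    Fin.reduceAdd]
  · ring
  · exact hs 0
  · linear_combination s 1 * s 1 * hs 0 + hs 1
  · linear_combination s 1 * s 1 * s 2 * s 2 * hs 0 + s 2 * s 2 * hs 1 + hs 2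
  · ring
  · linear_combination -s 1 * hs 0
  · linear_combination -s 2 * (s 1 * s 1 * hs 0 + hs 1)
  · linear_combination -s 3 * h + s 0 * s 1 * s 2 * hs 3

section FourCycle

variable (π : Equiv.Perm (Fin 4))

def fourCycle : SimpleGraph (Fin 4) := (cycleGraph 4).map π.toEmbedding

def diagonals : Set (Sym2 (Fin 4)) := {s(π 0, π 2), s(π 1, π 3)}

variable {π}

lemma fourCycle_adj_apply {i j : Fin 4} :
    (fourCycle π).Adj (π i) (π j) ↔ j = i + 1 ∨ i = j + 1 := by
  rw [fourCycle, ← π.coe_toEmbedding, map_adj_apply, cycleGraph_adj, sub_eq_iff_eq_add,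
    sub_eq_iff_eq_add, add_comm j, add_comm i, or_comm]

lemma fourCycle_connected : (fourCycle π).Connected :=
  (Iso.map π (cycleGraph 4)).connected_iff.mp cycleGraph_connected

lemma deg_fourCycle (v : Fin 4) : deg (fourCycle π) v = 2 := by
  obtain ⟨i, rfl⟩ := π.surjective v
  have hne : i + 1 ≠ i - 1 := by decide +revert
  have hnbr : (fourCycle π).neighborSet (π i) = {π (i + 1), π (i - 1)} := by
    ext w
    obtain ⟨j, rfl⟩ := π.surjective w
    simp only [mem_neighborSet, fourCycle_adj_apply, Set.mem_insert_iff, Set.mem_singleton_iff,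
      π.injective.eq_iff, eq_sub_iff_add_eq, eq_comm (a := j + 1)]
  rw [deg, hnbr, Set.ncard_pair (π.injective.ne hne)]

lemma diagonals_eq :
    diagonals π = (⊤ : SimpleGraph (Fin 4)).edgeSet \ (fourCycle π).edgeSet := by
  ext e
  induction e using Sym2.ind with | h u v => ?_
  obtain ⟨i, rfl⟩ := π.surjective u
  obtain ⟨j, rfl⟩ := π.surjective v
  simp only [diagonals, Set.mem_insert_iff, Set.mem_singleton_iff, Set.mem_sdiff, mem_edgeSet,
    top_adj, fourCycle_adj_apply, Sym2.eq_iff, π.injective.eq_iff, π.injective.ne_iff]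
  decide +revert

lemma isMatchingSet_diagonals : IsMatchingSet ⊤ (diagonals π) := by
  refine ⟨diagonals_eq.trans_subset Set.sdiff_subset, ?_⟩
  simp only [diagonals, Set.mem_insert_iff, Set.mem_singleton_iff]
  rintro _ (rfl | rfl) _ (rfl | rfl) v hv hv' <;>
    first
    | rfl
    | (obtain ⟨k, rfl⟩ := π.surjective v
       simp only [Sym2.mem_iff, π.injective.eq_iff] at hv hv'
       omega)

lemma exists_mem_diagonals (v : Fin 4) : ∃ e ∈ diagonals π, v ∈ e := by
  obtain ⟨i, rfl⟩ := π.surjective v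
  fin_cases i <;> simp [diagonals]

lemma exists_potential_fourCycle {σ : Sym2 (Fin 4) → ℤ}
    (hσ : IsSignature (completeGraph (Fin 4)) σ) (h : ∏ i, σ s(π i, π (i + 1)) = 1) :
    ∃ θ : Fin 4 → ℤ, (∀ v, θ v * θ v = 1) ∧
      ∀ u v, (fourCycle π).Adj u v → σ s(u, v) = θ u * θ v := by
  have hs (i : Fin 4) : σ s(π i, π (i + 1)) * σ s(π i, π (i + 1)) = 1 :=
    hσ.mul_self_eq_one (π.injective.ne (by decide +revert))
  obtain ⟨θ, hθ, hσθ⟩ := exists_potential_of_prod_eq_one _ hs h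
  refine ⟨θ ∘ π.symm, fun v => hθ _, fun u v huv => ?_⟩
  obtain ⟨i, rfl⟩ := π.surjective u
  obtain ⟨j, rfl⟩ := π.surjective v
  simp only [Function.comp_apply, Equiv.symm_apply_apply]
  rcases fourCycle_adj_apply.mp huv with rfl | rfl
  · exact hσθ i
  · rw [Sym2.eq_swap, hσθ j, mul_comm]

end FourCycle

def arcSign (i : Fin 4) (e : Sym2 (Fin 4)) : ℤ :=
  if e = s(i, i + 1) then 1 else if e = s(i - 1, i) then -1 else 0

lemma natAbs_arcSign_le (i : Fin 4) (e : Sym2 (Fin 4)) : (arcSign i e).natAbs ≤ 1 := by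
  unfold arcSign; split_ifs <;> decide

lemma arcSign_swap (i j : Fin 4) : arcSign j s(i, j) = -arcSign i s(i, j) := by
  decide +revert

lemma adj_of_arcSign_ne_zero {i j : Fin 4} : arcSign i s(i, j) ≠ 0 → j = i + 1 ∨ i = j + 1 := by
  decide +revert

lemma arcSign_ne {i j k : Fin 4} :
    i ≠ j → i ≠ k → j ≠ k → arcSign i s(i, j) ≠ arcSign i s(i, k) := by
  decide +revert

def cycleColoring (π : Equiv.Perm (Fin 4)) (θ : Fin 4 → ℤ) (u : Fin 4) (e : Sym2 (Fin 4)) : ℤ :=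
  θ u * arcSign (π.symm u) (e.map π.symm)

lemma isEdgeColoring_cycleColoring {σ : Sym2 (Fin 4) → ℤ} {π : Equiv.Perm (Fin 4)}
    {θ : Fin 4 → ℤ} (hθ : ∀ v, θ v * θ v = 1)
    (hσ : ∀ u v, (fourCycle π).Adj u v → σ s(u, v) = θ u * θ v) :
    IsEdgeColoring (completeGraph (Fin 4)) σ 3 (cycleColoring π θ) := by
  refine ⟨fun u v _ => ?_, fun u v _ => ?_, fun u v w huv huw hvw => ?_⟩ <;>
    obtain ⟨i, rfl⟩ := π.surjective u <;> obtain ⟨j, rfl⟩ := π.surjective v <;>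
    simp only [cycleColoring, Sym2.map_mk, Equiv.symm_apply_apply]
  · rw [mem_colorSet_three, Int.natAbs_mul,
      Int.isUnit_iff_natAbs_eq.mp (IsUnit.of_mul_eq_one _ (hθ _)), one_mul]
    exact natAbs_arcSign_le _ _
  · rw [arcSign_swap]
    by_cases h0 : arcSign i s(i, j) = 0
    · simp [h0]
    · rw [hσ _ _ (fourCycle_adj_apply.mpr (adj_of_arcSign_ne_zero h0))]
      linear_combination (-(θ (π i)) * arcSign i s(i, j)) * hθ (π j)
  · obtain ⟨k, rfl⟩ := π.surjective w
    rw [Equiv.symm_apply_apply]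
    exact (mul_right_injective₀ (left_ne_zero_of_mul_eq_one (hθ _))).ne
      (arcSign_ne (π.injective.ne_iff.mp huv.ne) (π.injective.ne_iff.mp huw.ne)
        (π.injective.ne_iff.mp hvw))

end Signed

/-- `K₄` is of class `1^±`: every signature attains `χ' = 3`, and `K₄` decomposes into a
perfect matching together with a balanced spanning 4-cycle. -/
theorem K4_class1 (σ : Sym2 (Fin 4) → ℤ)
    (hσ : IsSignature (completeGraph (Fin 4)) σ) :
    chromIndex (completeGraph (Fin 4)) σ = 3 ∧
    ∃ (M : Set (Sym2 (Fin 4))) (C : SimpleGraph (Fin 4)),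
      IsMatchingSet (completeGraph (Fin 4)) M ∧ (∀ v : Fin 4, ∃ e ∈ M, v ∈ e) ∧
      C ≤ completeGraph (Fin 4) ∧ C.Connected ∧ (∀ v : Fin 4, deg C v = 2) ∧
      Balanced C σ ∧ Disjoint M C.edgeSet ∧
      M ∪ C.edgeSet = (completeGraph (Fin 4)).edgeSet := by
  obtain ⟨π, hπ⟩ := exists_prod_fourCycle_eq_one hσ
  obtain ⟨θ, hθ, hσθ⟩ := exists_potential_fourCycle hσ hπ
  have hdeg : deg (completeGraph (Fin 4)) 0 = 3 := by rw [deg_top, Nat.card_eq_fintype_card]; rfl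
  have hcol : Colorable (completeGraph (Fin 4)) σ 3 := ⟨_, isEdgeColoring_cycleColoring hθ hσθ⟩
  refine ⟨(chromIndex_eq_deg_of_colorable 0 (by rwa [hdeg])).trans hdeg, diagonals π,
    fourCycle π, isMatchingSet_diagonals, exists_mem_diagonals, le_top, fourCycle_connected,
    deg_fourCycle, Balanced.of_potential hθ hσθ, ?_, ?_⟩
  · rw [diagonals_eq]
    exact Set.disjoint_sdiff_left
  · rw [diagonals_eq, Set.sdiff_union_of_subset (edgeSet_mono le_top)]
end

section
/- For even n = 2k with k ≥ 3, the wheel W_n decomposes into k − 1 pairwise edge-disjoint paths and a single edge; consequently W_n is of class 1^±. -/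
/-!
Write the rim of `W_{2t+2}` as `0, …, 2t`. The paths `2j, hub, 2j+1, 2j+2, 2j+3` (`j < t - 1`),
the path `2t-2, hub, 2t-1, 2t, 0, 1` and the spoke to `2t` partition the edges. For any
signature, color the `i`-th path with `±(i + 1)`, alternating the sign at each inner vertex and
flipping it across an edge as `σ` prescribes, and the spoke with `0`: this uses the `2t + 1`
colors of `colorSet (2t + 1)`. No coloring does better, since a vertex of degree `d` needs `d`
distinct colors and `colorSet n` has only `n` elements, while the hub has degree `2t + 1`.
-/

open SimpleGraph

open Signed SimpleGraph


/-- The relation defining the wheel with rim of length `m`. -/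
def WheelRel (m : ℕ) : Option (Fin m) → Option (Fin m) → Prop
  | none, some _ => True
  | some i, some j => j.val = (i.val + 1) % m
  | _, _ => False

/-- The wheel graph with rim cycle of length `m` (so `n = m + 1` vertices). -/
def Wheel (m : ℕ) : SimpleGraph (Option (Fin m)) :=
  SimpleGraph.fromRel (WheelRel m)


namespace Signed

variable {V : Type*}

section WalkSign

variable [DecidableEq V] {H : SimpleGraph V} (σ : Sym2 V → ℤ)

/-- The signed 2-edge-coloring of a path with colors `±c` that is `c` at the first vertex. -/
def walkSign : {u v : V} → H.Walk u v → ℤ → V → Sym2 V → ℤ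
  | _, _, .nil, _, _, _ => 0
  | u, _, .cons (v := w) _ p, c, x, e =>
      if e = s(u, w) then (if x = u then c else -σ e * c) else walkSign p (σ s(u, w) * c) x e

variable {σ}

theorem walkSign_start {u v : V} {p : H.Walk u v} (hp : p.IsPath) {e : Sym2 V}
    (he : e ∈ p.edges) (hu : u ∈ e) (c : ℤ) : walkSign σ p c u e = c := by
  cases p with
  | nil => simp at he
  | cons h p =>
    rw [Walk.cons_isPath_iff] at hp
    rw [Walk.edges_cons, List.mem_cons] at he
    rcases he with rfl | he
    · simp [walkSign]
    · exact absurd (Walk.mem_support_of_mem_edges he hu) hp.2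

theorem walkSign_antisymm {u v x y : V} (p : H.Walk u v) (he : s(x, y) ∈ p.edges)
    (hσ : IsUnit (σ s(x, y))) (c : ℤ) :
    walkSign σ p c x s(x, y) = -σ s(x, y) * walkSign σ p c y s(x, y) := by
  induction p generalizing c with
  | nil => simp at he
  | @cons u w _ h p ih =>
    by_cases hxy : s(x, y) = s(u, w)
    · have hσ2 := Int.isUnit_mul_self hσ
      rcases Sym2.eq_iff.mp hxy with ⟨rfl, rfl⟩ | ⟨rfl, rfl⟩
      · simp only [walkSign, if_neg h.ne.symm, if_true]
        linear_combination -c * hσ2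
      · simp [walkSign, h.ne.symm]
    · rw [Walk.edges_cons, List.mem_cons] at he
      simp only [walkSign, if_neg hxy]
      exact ih (he.resolve_left hxy) _

theorem walkSign_isUnit {u v : V} {p : H.Walk u v} (hσ : ∀ e ∈ p.edges, IsUnit (σ e))
    {c : ℤ} (hc : IsUnit c) {e : Sym2 V} (he : e ∈ p.edges) (x : V) :
    IsUnit (walkSign σ p c x e) := by
  induction p generalizing c with
  | nil => simp at he
  | @cons u w _ h p ih =>
    simp only [Walk.edges_cons, List.mem_cons, forall_eq_or_imp] at he hσ
    simp only [walkSign]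
    split_ifs with he' hx
    · exact hc
    · rw [he']
      exact hσ.1.neg.mul hc
    · exact ih hσ.2 (hσ.1.mul hc) (he.resolve_left he')

theorem walkSign_ne {u v : V} {p : H.Walk u v} (hp : p.IsPath)
    (hσ : ∀ e ∈ p.edges, IsUnit (σ e)) {c : ℤ} (hc : IsUnit c) {x : V} {e e' : Sym2 V}
    (he : e ∈ p.edges) (he' : e' ∈ p.edges) (hxe : x ∈ e) (hxe' : x ∈ e') (hne : e ≠ e') :
    walkSign σ p c x e ≠ walkSign σ p c x e' := by
  induction p generalizing c with
  | nil => simp at he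
  | @cons u w _ h p ih =>
    rw [Walk.cons_isPath_iff] at hp
    simp only [Walk.edges_cons, List.mem_cons, forall_eq_or_imp] at he he' hσ
    have tail_ne_first : ∀ f ∈ p.edges, f ≠ s(u, w) := fun f hf hfu =>
      hp.2 (Walk.mem_support_of_mem_edges hf (hfu ▸ Sym2.mem_mk_left u w))
    -- an edge at `x` of the tail puts `x` on the tail, so `x` is the second vertex `w`, where the
    -- first edge ends with `-σ c` and the tail starts with `σ c`
    have first_ne_tail : ∀ f ∈ p.edges, x ∈ f → x ∈ s(u, w) →
        walkSign σ (.cons h p) c x s(u, w) ≠ walkSign σ (.cons h p) c x f := by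
      intro f hf hxf hx
      have hxu : x ≠ u := fun hxu => hp.2 (hxu ▸ Walk.mem_support_of_mem_edges hf hxf)
      obtain rfl : x = w := (Sym2.mem_iff.mp hx).resolve_left hxu
      simp only [walkSign, ↓reduceIte, if_neg hxu, if_neg (tail_ne_first f hf),
        walkSign_start hp.1 hf hxf]
      intro heq
      exact (hσ.1.mul hc).ne_zero (by linarith)
    rcases he with rfl | he <;> rcases he' with rfl | he'
    · exact absurd rfl hne
    · exact first_ne_tail e' he' hxe' hxe
    · exact (first_ne_tail e he hxe hxe').symm
    · simp only [walkSign, if_neg (tail_ne_first e he), if_neg (tail_ne_first e' he')]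
      exact ih hp.1 hσ.2 (hσ.1.mul hc) he he'

end WalkSign

theorem mem_colorSet_odd {m : ℕ} {x : ℤ} (hx : x.natAbs ≤ m) : x ∈ colorSet (2 * m + 1) :=
  ⟨by omega, fun h => absurd h (Nat.not_even_two_mul_add_one m)⟩

section CoverColoring

variable [DecidableEq V] {m : ℕ} {H : Fin m → SimpleGraph V} {a b : Fin m → V}

noncomputable def coverColoring (σ : Sym2 V → ℤ) (P : ∀ i, (H i).Walk (a i) (b i))
    (x : V) (e : Sym2 V) : ℤ :=
  if h : ∃ i, e ∈ (P i).edges then ((h.choose : ℕ) + 1) * walkSign σ (P h.choose) 1 x e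
  else 0

variable {σ : Sym2 V → ℤ} {P : ∀ i, (H i).Walk (a i) (b i)}

theorem coverColoring_of_exists {e : Sym2 V} (h : ∃ i, e ∈ (P i).edges) :
    ∃ i, e ∈ (P i).edges ∧
      ∀ x, coverColoring σ P x e = ((i : ℕ) + 1) * walkSign σ (P i) 1 x e :=
  ⟨h.choose, h.choose_spec, fun _ => dif_pos h⟩

theorem coverColoring_of_not_exists {e : Sym2 V} (h : ¬ ∃ i, e ∈ (P i).edges) (x : V) :
    coverColoring σ P x e = 0 :=
  dif_neg h

theorem natAbs_coverColoring (hσ : ∀ i, ∀ e ∈ (P i).edges, IsUnit (σ e)) {x : V} {e : Sym2 V}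
    {i : Fin m} (he : e ∈ (P i).edges)
    (hf : coverColoring σ P x e = ((i : ℕ) + 1) * walkSign σ (P i) 1 x e) :
    (coverColoring σ P x e).natAbs = i + 1 := by
  rw [hf, Int.natAbs_mul, Int.isUnit_iff_natAbs_eq.mp (walkSign_isUnit (hσ i) isUnit_one he x)]
  omega

theorem coverColoring_ne (hP : ∀ i, (P i).IsPath) (hσ : ∀ i, ∀ e ∈ (P i).edges, IsUnit (σ e))
    {x : V} {e e' : Sym2 V} (hxe : x ∈ e) (hxe' : x ∈ e') (hne : e ≠ e')
    (h : (∃ i, e ∈ (P i).edges) ∨ ∃ i, e' ∈ (P i).edges) :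
    coverColoring σ P x e ≠ coverColoring σ P x e' := by
  intro heq
  have habs := congrArg Int.natAbs heq
  by_cases h₁ : ∃ i, e ∈ (P i).edges <;> by_cases h₂ : ∃ i, e' ∈ (P i).edges
  · obtain ⟨i, hi, hf⟩ := coverColoring_of_exists (σ := σ) h₁
    obtain ⟨j, hj, hf'⟩ := coverColoring_of_exists (σ := σ) h₂
    rw [natAbs_coverColoring hσ hi (hf x), natAbs_coverColoring hσ hj (hf' x)] at habs
    obtain rfl : i = j := Fin.ext (by omega)
    rw [hf, hf'] at heq
    exact walkSign_ne (hP i) (hσ i) isUnit_one hi hj hxe hxe' hne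
      (mul_left_cancel₀ (by positivity) heq)
  · obtain ⟨i, hi, hf⟩ := coverColoring_of_exists (σ := σ) h₁
    rw [natAbs_coverColoring hσ hi (hf x), coverColoring_of_not_exists h₂] at habs
    omega
  · obtain ⟨j, hj, hf'⟩ := coverColoring_of_exists (σ := σ) h₂
    rw [natAbs_coverColoring hσ hj (hf' x), coverColoring_of_not_exists h₁] at habs
    omega
  · exact h.elim h₁ h₂

theorem isEdgeColoring_coverColoring {G : SimpleGraph V} (hσ : IsSignature G σ)
    (hP : ∀ i, (P i).IsPath) (hPG : ∀ i, ∀ e ∈ (P i).edges, e ∈ G.edgeSet) {e₀ : Sym2 V}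
    (hcover : ∀ e ∈ G.edgeSet, e = e₀ ∨ ∃ i, e ∈ (P i).edges) :
    IsEdgeColoring G σ (2 * m + 1) (coverColoring σ P) := by
  have hunit : ∀ i, ∀ e ∈ (P i).edges, IsUnit (σ e) := fun i e he =>
    Int.isUnit_iff.mpr (hσ e (hPG i e he))
  refine ⟨fun u v _ => ?_, fun u v _ => ?_, fun u v w huv huw hvw => ?_⟩
  · by_cases h : ∃ i, s(u, v) ∈ (P i).edges
    · obtain ⟨i, hi, hf⟩ := coverColoring_of_exists (σ := σ) h
      exact mem_colorSet_odd ((natAbs_coverColoring hunit hi (hf u)).trans_le i.isLt)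
    · rw [coverColoring_of_not_exists h]
      exact mem_colorSet_odd (Nat.zero_le m)
  · by_cases h : ∃ i, s(u, v) ∈ (P i).edges
    · obtain ⟨i, hi, hf⟩ := coverColoring_of_exists (σ := σ) h
      rw [hf, hf, walkSign_antisymm _ hi (hunit i _ hi)]
      ring
    · simp [coverColoring_of_not_exists h]
  · have hne : s(u, v) ≠ s(u, w) := fun h => hvw (Sym2.congr_right.mp h)
    refine coverColoring_ne hP hunit (Sym2.mem_mk_left u v) (Sym2.mem_mk_left u w) hne ?_
    -- only the edge `e₀` can lie on none of the walks
    by_contra h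
    rw [not_or] at h
    exact hne (((hcover _ huv).resolve_right h.1).trans ((hcover _ huw).resolve_right h.2).symm)

end CoverColoring

theorem colorable_of_pathGraph_cover {G : SimpleGraph V} {σ : Sym2 V → ℤ}
    (hσ : IsSignature G σ) {m : ℕ} {D : Fin m → SimpleGraph V} (hle : ∀ i, D i ≤ G)
    (hpath : ∀ i, IsPathGraph (D i)) {e₀ : Sym2 V}
    (hcover : G.edgeSet ⊆ (⋃ i, (D i).edgeSet) ∪ {e₀}) :
    Colorable G σ (2 * m + 1) := by
  classical
  choose a b P hP hPD using hpath
  refine ⟨coverColoring σ P, isEdgeColoring_coverColoring hσ hP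
    (fun i e he => edgeSet_mono (hle i) ((hPD i e).mpr he)) (e₀ := e₀) fun e he => ?_⟩
  rcases hcover he with he | he
  · obtain ⟨i, hi⟩ := Set.mem_iUnion.mp he
    exact Or.inr ⟨i, (hPD i e).mp hi⟩
  · exact Or.inl he

def colorCode (n : ℕ) (x : ℤ) : ℕ :=
  if x = 0 then n - 1 else if 0 < x then 2 * x.natAbs - 2 else 2 * x.natAbs - 1

theorem colorCode_lt {n : ℕ} {x : ℤ} (hx : x ∈ colorSet n) : colorCode n x < n := by
  obtain ⟨hx, hx0⟩ := hx
  rw [Nat.even_iff] at hx0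
  unfold colorCode
  split_ifs <;> omega

theorem colorCode_injOn (n : ℕ) : Set.InjOn (colorCode n) (colorSet n) := by
  intro x ⟨hx, hx0⟩ y ⟨hy, hy0⟩ h
  rw [Nat.even_iff] at hx0 hy0
  unfold colorCode at h
  split_ifs at h <;> omega

theorem degree_le_of_colorable [Fintype V] {G : SimpleGraph V} [DecidableRel G.Adj]
    {σ : Sym2 V → ℤ} {n : ℕ} (h : Colorable G σ n) (v : V) : G.degree v ≤ n := by
  obtain ⟨f, hcol, -, hdist⟩ := h
  rw [← card_neighborFinset_eq_degree, ← Finset.card_range n]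
  refine Finset.card_le_card_of_injOn (fun w => colorCode n (f v s(v, w))) (fun w hw => ?_)
    fun w hw w' hw' hww' => ?_
  · simpa using colorCode_lt (hcol v w ((mem_neighborFinset G v w).mp hw))
  · have hw := (mem_neighborFinset G v w).mp hw
    have hw' := (mem_neighborFinset G v w').mp hw'
    by_contra hne
    exact hdist v w w' hw hw' hne (colorCode_injOn n (hcol v w hw) (hcol v w' hw') hww')

theorem maxDeg_le_of_colorable [Fintype V] {G : SimpleGraph V} {σ : Sym2 V → ℤ} {n : ℕ}
    (h : Colorable G σ n) : maxDeg G ≤ n := by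
  classical
  exact maxDegree_le_of_forall_degree_le _ _ (degree_le_of_colorable h)

theorem chromIndex_eq_maxDeg_of_colorable [Fintype V] {G : SimpleGraph V} {σ : Sym2 V → ℤ}
    {n : ℕ} (h : Colorable G σ n) (hn : n ≤ maxDeg G) : chromIndex G σ = maxDeg G :=
  le_antisymm ((Nat.sInf_le h).trans hn)
    (maxDeg_le_of_colorable (Nat.sInf_mem (s := {n | Colorable G σ n}) ⟨n, h⟩))

end Signed

theorem SimpleGraph.Walk.IsPath.isPathGraph_spanningCoe {V : Type*} {G : SimpleGraph V}
    {u v : V} {p : G.Walk u v} (hp : p.IsPath) : IsPathGraph p.toSubgraph.spanningCoe :=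
  ⟨u, v, p.transfer _ fun e he => by simpa using he, hp.transfer _, fun e => by simp⟩

section Wheel

variable {m : ℕ} [NeZero m]

def rimVertex (m : ℕ) [NeZero m] (i : ℕ) : Option (Fin m) :=
  some (Fin.ofNat m i)

@[simp]
theorem rimVertex_ne_none (i : ℕ) : rimVertex m i ≠ none :=
  Option.some_ne_none _

@[simp]
theorem none_ne_rimVertex (i : ℕ) : none ≠ rimVertex m i :=
  (rimVertex_ne_none i).symm

theorem rimVertex_inj {i j : ℕ} (hi : i < m) (hj : j < m) :
    rimVertex m i = rimVertex m j ↔ i = j := by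
  simp [rimVertex, Fin.ext_iff, Nat.mod_eq_of_lt hi, Nat.mod_eq_of_lt hj]

theorem Wheel.adj_hub (i : ℕ) : (Wheel m).Adj none (rimVertex m i) := by
  simp [Wheel, WheelRel, rimVertex]

theorem Wheel.adj_rim (hm : 2 ≤ m) {i j : ℕ} (hij : j % m = (i + 1) % m) :
    (Wheel m).Adj (rimVertex m i) (rimVertex m j) := by
  have hsucc : (i + 1) % m = if m ≤ i % m + 1 then i % m + 1 - m else i % m + 1 := by
    rw [Nat.add_mod_eq_ite, Nat.mod_eq_of_lt (by omega : 1 < m)]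
  have hlt := Nat.mod_lt i (by omega : 0 < m)
  rw [Wheel, fromRel_adj]
  refine ⟨?_, Or.inl ?_⟩
  · rw [rimVertex, rimVertex, ne_eq, Option.some_inj, Fin.ext_iff, Fin.val_ofNat, Fin.val_ofNat,
      hij, hsucc]
    split_ifs <;> omega
  · simp only [WheelRel, rimVertex, Fin.val_ofNat, Nat.mod_add_mod, hij]

theorem some_eq_rimVertex {j : Fin m} {n : ℕ} (h : j.val = n % m) : some j = rimVertex m n := by
  rw [rimVertex, Option.some_inj, Fin.ext_iff, Fin.val_ofNat, h]

theorem Wheel.edge_cases {e : Sym2 (Option (Fin m))} (he : e ∈ (Wheel m).edgeSet) :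
    (∃ i < m, e = s(none, rimVertex m i)) ∨
      (∃ i, i + 1 < m ∧ e = s(rimVertex m i, rimVertex m (i + 1))) ∨
      e = s(rimVertex m (m - 1), rimVertex m 0) := by
  have rim (a b : Fin m) (hab : b.val = (a.val + 1) % m) :
      (∃ i, i + 1 < m ∧ s(some a, some b) = s(rimVertex m i, rimVertex m (i + 1))) ∨
        s(some a, some b) = s(rimVertex m (m - 1), rimVertex m 0) := by
    by_cases ha : a.val + 1 < m
    · rw [Nat.mod_eq_of_lt ha] at hab
      exact Or.inl ⟨a, ha, by
        rw [some_eq_rimVertex (Nat.mod_eq_of_lt a.isLt).symm, some_eq_rimVertex (n := a + 1)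
          (by rw [hab, Nat.mod_eq_of_lt ha])]⟩
    · have ha' : a.val + 1 = m := by omega
      rw [ha', Nat.mod_self] at hab
      exact Or.inr (by
        rw [some_eq_rimVertex (n := m - 1) (by rw [Nat.mod_eq_of_lt (by omega)]; omega),
          some_eq_rimVertex (n := 0) (by simp [hab])])
  induction e using Sym2.ind with
  | _ u v =>
    rw [mem_edgeSet, Wheel, fromRel_adj] at he
    obtain ⟨-, hrel⟩ := he
    match u, v, hrel with
    | none, some i, _ =>
      exact Or.inl ⟨i, i.isLt, by rw [some_eq_rimVertex (Nat.mod_eq_of_lt i.isLt).symm]⟩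
    | some i, none, _ =>
      exact Or.inl ⟨i, i.isLt, by
        rw [Sym2.eq_swap, some_eq_rimVertex (Nat.mod_eq_of_lt i.isLt).symm]⟩
    | some i, some j, .inl h => exact Or.inr (rim i j h)
    | some i, some j, .inr h => exact Or.inr (Sym2.eq_swap (a := some i) ▸ rim j i h)

end Wheel

theorem Wheel.degree_hub (m : ℕ) [DecidableRel (Wheel m).Adj] : (Wheel m).degree none = m := by
  have : (Wheel m).neighborFinset none = Finset.univ.erase none := by
    ext v
    rw [mem_neighborFinset, Finset.mem_erase]
    cases v <;> simp [Wheel, WheelRel]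
  rw [← card_neighborFinset_eq_degree, this, Finset.card_erase_of_mem (Finset.mem_univ _),
    Finset.card_univ, Fintype.card_option, Fintype.card_fin, Nat.add_sub_cancel]

theorem Wheel.le_maxDeg (m : ℕ) : m ≤ maxDeg (Wheel m) := by
  classical
  exact (Wheel.degree_hub m).symm.le.trans (degree_le_maxDegree _ _)

section WheelDecomposition

variable {t : ℕ} (ht : 2 ≤ t)

/-- The path `2j, hub, 2j+1, 2j+2, 2j+3` of `W_{2t+2}`. -/
def shortPath (j : ℕ) :
    (Wheel (2 * t + 1)).Walk (rimVertex _ (2 * j)) (rimVertex _ (2 * j + 3)) :=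
  .cons (Wheel.adj_hub _).symm <| .cons (Wheel.adj_hub _) <|
    .cons (Wheel.adj_rim (by omega) rfl) <| .cons (Wheel.adj_rim (by omega) rfl) .nil

/-- The path `2t-2, hub, 2t-1, 2t, 0, 1` of `W_{2t+2}`. -/
def longPath : (Wheel (2 * t + 1)).Walk (rimVertex _ (2 * t - 2)) (rimVertex _ 1) :=
  .cons (Wheel.adj_hub _).symm <| .cons (Wheel.adj_hub (2 * t - 1)) <|
    .cons (Wheel.adj_rim (j := 2 * t) (by omega) (by rw [Nat.sub_add_cancel (by omega)])) <|
    .cons (Wheel.adj_rim (j := 0) (by omega) (by simp)) <|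
    .cons (Wheel.adj_rim (j := 1) (by omega) rfl) .nil

theorem shortPath_isPath {j : ℕ} (hj : j + 1 < t) : (shortPath ht j).IsPath := by
  rw [Walk.isPath_def]
  simp (disch := omega) [shortPath, rimVertex_inj]
  omega

theorem longPath_isPath : (longPath ht).IsPath := by
  rw [Walk.isPath_def]
  simp (disch := omega) [longPath, rimVertex_inj]
  omega

def wheelPath (j : Fin t) : SimpleGraph (Option (Fin (2 * t + 1))) :=
  if j.val + 1 = t then (longPath ht).toSubgraph.spanningCoe
  else (shortPath ht j).toSubgraph.spanningCoe

theorem mem_edgeSet_wheelPath {j : Fin t} {e : Sym2 (Option (Fin (2 * t + 1)))} :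
    e ∈ (wheelPath ht j).edgeSet ↔
      e ∈ if j.val + 1 = t then (longPath ht).edges else (shortPath ht j).edges := by
  unfold wheelPath
  split_ifs <;> simp

theorem wheelPath_le (j : Fin t) : wheelPath ht j ≤ Wheel (2 * t + 1) := by
  unfold wheelPath
  split_ifs <;> exact Subgraph.spanningCoe_le _

theorem isPathGraph_wheelPath (j : Fin t) : IsPathGraph (wheelPath ht j) := by
  unfold wheelPath
  split_ifs with hj
  · exact (longPath_isPath ht).isPathGraph_spanningCoe
  · exact (shortPath_isPath ht (by omega)).isPathGraph_spanningCoe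

theorem disjoint_wheelPath {i j : Fin t} (hij : i ≠ j) :
    Disjoint (wheelPath ht i).edgeSet (wheelPath ht j).edgeSet := by
  have hij : i.val ≠ j.val := Fin.val_ne_of_ne hij
  rw [Set.disjoint_left]
  intro e hi hj
  rw [mem_edgeSet_wheelPath] at hi hj
  split_ifs at hi hj <;>
    simp only [shortPath, longPath, Walk.edges_cons, Walk.edges_nil, List.mem_cons,
      List.not_mem_nil, or_false] at hi hj <;>
    rcases hi with rfl | rfl | rfl | rfl | rfl <;>
    simp (disch := omega) [rimVertex_inj] at hj <;> omega

theorem hubEdge_not_mem_wheelPath (j : Fin t) :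
    s(none, rimVertex _ (2 * t)) ∉ (wheelPath ht j).edgeSet := by
  rw [mem_edgeSet_wheelPath]
  split_ifs <;> simp (disch := omega) [shortPath, longPath, rimVertex_inj] <;> omega

theorem iUnion_wheelPath :
    (⋃ j, (wheelPath ht j).edgeSet) ∪ {s(none, rimVertex _ (2 * t))} =
      (Wheel (2 * t + 1)).edgeSet := by
  refine subset_antisymm (Set.union_subset (Set.iUnion_subset fun j => edgeSet_mono
    (wheelPath_le ht j)) (Set.singleton_subset_iff.mpr (Wheel.adj_hub _))) fun e he => ?_
  have on_path (j : ℕ) (hj : j < t)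
      (h : e ∈ if j + 1 = t then (longPath ht).edges else (shortPath ht j).edges) :
      e ∈ (⋃ j, (wheelPath ht j).edgeSet) ∪ {s(none, rimVertex _ (2 * t))} :=
    Or.inl (Set.mem_iUnion.mpr ⟨⟨j, hj⟩, (mem_edgeSet_wheelPath ht).mpr h⟩)
  rcases Wheel.edge_cases he with ⟨i, hi, rfl⟩ | ⟨i, hi, rfl⟩ | rfl
  · by_cases hlast : i = 2 * t
    · exact Or.inr (by rw [hlast]; rfl)
    · refine on_path (i / 2) (by omega) ?_
      split_ifs <;> simp (disch := omega) [shortPath, longPath, rimVertex_inj] <;> omega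
  · by_cases h0 : i = 0
    · refine on_path (t - 1) (by omega) ?_
      rw [if_pos (by omega)]
      simp (disch := omega) [longPath, rimVertex_inj, h0]
    · refine on_path ((i - 1) / 2) (by omega) ?_
      split_ifs <;> simp (disch := omega) [shortPath, longPath, rimVertex_inj] <;> omega
  · refine on_path (t - 1) (by omega) ?_
    rw [if_pos (by omega)]
    simp (disch := omega) [longPath, rimVertex_inj]

end WheelDecomposition

/-- For `n = 2k` with `k ≥ 3`, the wheel `W_n` (rim length `2k−1`) decomposes into `k−1`
pairwise edge-disjoint paths and a single edge; consequently it is of class `1^±`. -/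
theorem wheel_even_class1 (k : ℕ) (hk : 3 ≤ k) :
    (∃ (D : Fin (k - 1) → SimpleGraph (Option (Fin (2 * k - 1))))
       (e : Sym2 (Option (Fin (2 * k - 1)))),
      e ∈ (Wheel (2 * k - 1)).edgeSet ∧
      (∀ i, D i ≤ Wheel (2 * k - 1)) ∧
      (∀ i, IsPathGraph (D i)) ∧
      (∀ i j, i ≠ j → Disjoint ((D i).edgeSet) ((D j).edgeSet)) ∧
      (∀ i, e ∉ (D i).edgeSet) ∧
      ((⋃ i, (D i).edgeSet) ∪ {e}) = (Wheel (2 * k - 1)).edgeSet) ∧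
    Class1pm (Wheel (2 * k - 1)) := by
  obtain ⟨t, rfl⟩ : ∃ t, k = t + 1 := ⟨k - 1, by omega⟩
  have ht : 2 ≤ t := by omega
  rw [show 2 * (t + 1) - 1 = 2 * t + 1 by omega, show t + 1 - 1 = t from rfl]
  refine ⟨⟨wheelPath ht, _, Wheel.adj_hub _, wheelPath_le ht, isPathGraph_wheelPath ht,
    fun _ _ => disjoint_wheelPath ht, hubEdge_not_mem_wheelPath ht, iUnion_wheelPath ht⟩,
    fun σ hσ => ?_⟩
  exact chromIndex_eq_maxDeg_of_colorable (colorable_of_pathGraph_cover hσ (wheelPath_le ht)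
    (isPathGraph_wheelPath ht) (iUnion_wheelPath ht).ge) (Wheel.le_maxDeg _)
end
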